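/- The Hermite coefficient φ̂(n) := E[φ(J)·h_n(J)] of φ(J) := σ_i σ_j vanishes unless both i and j belong to V(n) and, moreover, the connected components of the graph G(n) containing i and j are either equal, or both intersect the boundary set B. -/

import Mathlib

open MeasureTheory ProbabilityTheory Real Finset

namespace EA

/-- Environments: edge weights indexed by unordered pairs of vertices. -/
abbrev Env (V : Type) := Sym2 V → ℝ

/-- The product `σ i * σ j` over an unordered pair `{i, j}`. -/
def spinProd {V : Type} (σ : V → ℝ) : Sym2 V → ℝ :=
  Sym2.lift ⟨fun i j => σ i * σ j, fun _ _ => mul_comm _ _⟩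

/-- The Edwards–Anderson Hamiltonian. -/
noncomputable def ham {V : Type} [Fintype V] [DecidableEq V]
    (G : SimpleGraph V) [DecidableRel G.Adj] (J : Env V) (σ : V → ℝ) : ℝ :=
  -∑ e ∈ G.edgeFinset, J e * spinProd σ e

/-- Spin configurations take values ±1. -/
def IsConfig {V : Type} (σ : V → ℝ) : Prop := ∀ i, σ i = 1 ∨ σ i = -1

/-- Satisfying the boundary condition `γ` on `B`. -/
def SatisfiesBC {V : Type} (B : Finset V) (γ : V → ℝ) (σ : V → ℝ) : Prop :=
  ∀ i ∈ B, σ i = γ i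

/-- Ground state: minimizer of the Hamiltonian under the boundary condition. -/
def IsGroundState {V : Type} [Fintype V] [DecidableEq V]
    (G : SimpleGraph V) [DecidableRel G.Adj] (B : Finset V) (γ : V → ℝ)
    (J : Env V) (σ : V → ℝ) : Prop :=
  IsConfig σ ∧ SatisfiesBC B γ σ ∧
    ∀ τ : V → ℝ, IsConfig τ → SatisfiesBC B γ τ → ham G J σ ≤ ham G J τ

/-- i.i.d. standard Gaussian environment. -/
noncomputable def gaussEnv (V : Type) [Fintype V] [DecidableEq V] : Measure (Env V) :=
  Measure.pi fun _ : Sym2 V => gaussianReal 0 1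

instance (V : Type) [Fintype V] [DecidableEq V] : IsProbabilityMeasure (gaussEnv V) := by
  unfold gaussEnv; infer_instance

/-- Bernoulli(p) measure on `Bool`. -/
noncomputable def bern (p : ℝ) : Measure Bool :=
  (PMF.bernoulli (min (Real.toNNReal p) 1) (min_le_right _ _)).toMeasure

instance (p : ℝ) : IsProbabilityMeasure (bern p) := by
  unfold bern; infer_instance

/-- Joint law of `(J, J', coin flips)`. -/
noncomputable def μ3 (V : Type) [Fintype V] [DecidableEq V] (p : ℝ) :
    Measure (Env V × Env V × (Sym2 V → Bool)) :=
  (gaussEnv V).prod ((gaussEnv V).prod (Measure.pi fun _ : Sym2 V => bern p))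

/-- Joint law of `(J, J')`. -/
noncomputable def μ2 (V : Type) [Fintype V] [DecidableEq V] : Measure (Env V × Env V) :=
  (gaussEnv V).prod (gaussEnv V)

/-- Perturbation of the first kind. -/
noncomputable def perturb1 {V : Type} (p : ℝ) (J J' : Env V) : Env V :=
  fun e => (1 - p) * J e + Real.sqrt (2 * p - p ^ 2) * J' e

/-- Perturbation of the second kind. -/
def perturb2 {V : Type} (J J' : Env V) (ε : Sym2 V → Bool) : Env V :=
  fun e => if ε e then J' e else J e

/-- Site overlap over interior vertices. -/
noncomputable def overlap {V : Type} [Fintype V] [DecidableEq V]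
    (B : Finset V) (σ τ : V → ℝ) : ℝ :=
  (∑ i ∈ univ \ B, σ i * τ i) / (univ \ B).card

/-- `min{d(i,j), d(i,B)+d(j,B)}` (the latter term omitted when `B = ∅`). -/
noncomputable def minDist {V : Type} (G : SimpleGraph V) (B : Finset V) (i j : V) : ℕ :=
  if h : B.Nonempty then
    min (G.dist i j) ((B.inf' h fun k => G.dist i k) + B.inf' h fun k => G.dist j k)
  else G.dist i j

open Classical in
/-- Edge boundary of `A`: edges with one endpoint in `A` and the other outside. -/
noncomputable def edgeBdry {V : Type} [Fintype V] [DecidableEq V]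
    (G : SimpleGraph V) [DecidableRel G.Adj] (A : Finset V) : Finset (Sym2 V) :=
  G.edgeFinset.filter fun e => ∃ i ∈ e, ∃ j ∈ e, i ∈ A ∧ j ∉ A

/-- Flip the spins on `A`. -/
def flipOn {V : Type} [DecidableEq V] (A : Finset V) (σ : V → ℝ) : V → ℝ :=
  fun i => if i ∈ A then -σ i else σ i


/-- Normalized Hermite function `h_m`. -/
noncomputable def hermiteFn (m : ℕ) (x : ℝ) : ℝ :=
  Polynomial.aeval x (Polynomial.hermite m) / Real.sqrt (Nat.factorial m)

/-- Product Hermite polynomial `h_n(J)` for a multi-index `n`. -/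
noncomputable def hermiteProd {V : Type} [Fintype V] [DecidableEq V]
    (G : SimpleGraph V) [DecidableRel G.Adj] (n : Sym2 V → ℕ) (J : Env V) : ℝ :=
  ∏ e ∈ G.edgeFinset, hermiteFn (n e) (J e)

/-- `E(n)`: the set of edges with positive index. -/
def suppEdges {V : Type} [Fintype V] [DecidableEq V]
    (G : SimpleGraph V) [DecidableRel G.Adj] (n : Sym2 V → ℕ) : Finset (Sym2 V) :=
  G.edgeFinset.filter fun e => 0 < n e

/-- `G(n)`: the graph spanned by the edges of `E(n)`. -/
def suppGraph {V : Type} [Fintype V] [DecidableEq V]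
    (G : SimpleGraph V) [DecidableRel G.Adj] (n : Sym2 V → ℕ) : SimpleGraph V :=
  SimpleGraph.fromEdgeSet (↑(suppEdges G n))


/-! ### Auxiliary machinery -/

section Aux
set_option linter.unusedSectionVars false

variable {V : Type} [Fintype V] [DecidableEq V]

lemma spinProd_mk (σ : V → ℝ) (u v : V) : spinProd σ s(u, v) = σ u * σ v := rfl

lemma sq_one_of_config {σ : V → ℝ} (h : IsConfig σ) (v : V) : σ v * σ v = 1 := by
  rcases h v with h' | h' <;> rw [h'] <;> norm_num

lemma mem_edgeBdry {G : SimpleGraph V} [DecidableRel G.Adj] {A : Finset V} {e : Sym2 V} :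
    e ∈ edgeBdry G A ↔ e ∈ G.edgeFinset ∧ ∃ i ∈ e, ∃ j ∈ e, i ∈ A ∧ j ∉ A := by
  classical
  simp [edgeBdry]

lemma flipOn_flipOn (A : Finset V) (σ : V → ℝ) : flipOn A (flipOn A σ) = σ := by
  funext v; unfold flipOn; by_cases h : v ∈ A <;> simp [h]

lemma isConfig_flipOn (A : Finset V) {σ : V → ℝ} (h : IsConfig σ) : IsConfig (flipOn A σ) := by
  intro v; unfold flipOn; rcases h v with h' | h' <;> by_cases hv : v ∈ A <;> simp [h', hv]

/-- The measurable equivalence `x ↦ -x` on `ℝ`. -/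
noncomputable def negE : ℝ ≃ᵐ ℝ := (Homeomorph.neg ℝ).toMeasurableEquiv

/-- Sign flip on a set of edges, as a measurable equivalence of environments. -/
noncomputable def flipEquiv (D : Finset (Sym2 V)) : Env V ≃ᵐ Env V :=
  MeasurableEquiv.piCongrRight fun e => if e ∈ D then negE else MeasurableEquiv.refl ℝ

lemma flipEquiv_apply (D : Finset (Sym2 V)) (J : Env V) (e : Sym2 V) :
    flipEquiv D J e = if e ∈ D then -J e else J e := by
  by_cases h : e ∈ D <;>
    simp [flipEquiv, negE, MeasurableEquiv.piCongrRight, Equiv.piCongrRight, h,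
      MeasurableEquiv.coe_mk, Homeomorph.neg]

lemma ham_flip (G : SimpleGraph V) [DecidableRel G.Adj] (A : Finset V) (J : Env V)
    (σ : V → ℝ) :
    ham G (flipEquiv (edgeBdry G A) J) σ = ham G J (flipOn A σ) := by
  unfold ham
  congr 1
  refine Finset.sum_congr rfl fun e he => ?_
  induction e using Sym2.inductionOn with
  | hf u v =>
    have huv : u ≠ v :=
      ((G.mem_edgeSet).mp (SimpleGraph.mem_edgeFinset.mp he)).ne
    have hmem : s(u, v) ∈ edgeBdry G A ↔ (u ∈ A ∧ v ∉ A) ∨ (v ∈ A ∧ u ∉ A) := by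
      rw [mem_edgeBdry]
      constructor
      · rintro ⟨-, x, hx, y, hy, hxA, hyA⟩
        rw [Sym2.mem_iff] at hx hy
        rcases hx with rfl | rfl <;> rcases hy with rfl | rfl <;> tauto
      · rintro (⟨h1, h2⟩ | ⟨h1, h2⟩)
        · exact ⟨he, u, Sym2.mem_mk_left _ _, v, Sym2.mem_mk_right _ _, h1, h2⟩
        · exact ⟨he, v, Sym2.mem_mk_right _ _, u, Sym2.mem_mk_left _ _, h1, h2⟩
    rw [flipEquiv_apply]
    by_cases hu : u ∈ A <;> by_cases hv : v ∈ A <;>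
      simp only [hmem, hu, hv, if_pos, if_neg, spinProd_mk, flipOn, not_true, not_false_iff,
        and_true, and_false, false_and, true_and, or_false, false_or, if_true, if_false,
        or_self, ite_true, ite_false] <;>
      ring

lemma isGroundState_flip (G : SimpleGraph V) [DecidableRel G.Adj] (B : Finset V)
    (γ : V → ℝ) (A : Finset V) (hAB : ∀ b ∈ B, b ∉ A) {J : Env V} {σ : V → ℝ}
    (h : IsGroundState G B γ J σ) :
    IsGroundState G B γ (flipEquiv (edgeBdry G A) J) (flipOn A σ) := by
  obtain ⟨hc, hbc, hmin⟩ := h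
  refine ⟨isConfig_flipOn A hc, fun b hb => ?_, fun τ hτ hτb => ?_⟩
  · unfold flipOn; rw [if_neg (hAB b hb)]; exact hbc b hb
  · rw [ham_flip, flipOn_flipOn]
    calc ham G J σ ≤ ham G J (flipOn A τ) :=
          hmin _ (isConfig_flipOn A hτ) fun b hb => by
            unfold flipOn; rw [if_neg (hAB b hb)]; exact hτb b hb
      _ = ham G (flipEquiv (edgeBdry G A) J) τ := (ham_flip G A J τ).symm

lemma spin_pair_eq {G : SimpleGraph V} [DecidableRel G.Adj] {σ τ : V → ℝ}
    (hσ : IsConfig σ) (hτ : IsConfig τ)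
    (hsp : ∀ e ∈ G.edgeFinset, spinProd σ e = spinProd τ e)
    {i j : V} (h : G.Reachable i j) : σ i * σ j = τ i * τ j := by
  have key : ∀ {u v : V} (_ : G.Walk u v), σ u * σ v = τ u * τ v := by
    intro u v w
    induction w with
    | nil => rw [sq_one_of_config hσ, sq_one_of_config hτ]
    | @cons u b v hadj p ih =>
      have he : s(u, b) ∈ G.edgeFinset :=
        SimpleGraph.mem_edgeFinset.mpr ((G.mem_edgeSet).mpr hadj)
      have h1 : σ u * σ b = τ u * τ b := hsp _ he
      have eσ : σ u * σ v = (σ u * σ b) * (σ b * σ v) := by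
        have h2 := sq_one_of_config hσ b
        have h3 : (σ u * σ b) * (σ b * σ v) = (σ b * σ b) * (σ u * σ v) := by ring
        rw [h2, one_mul] at h3; exact h3.symm
      have eτ : τ u * τ v = (τ u * τ b) * (τ b * τ v) := by
        have h2 := sq_one_of_config hτ b
        have h3 : (τ u * τ b) * (τ b * τ v) = (τ b * τ b) * (τ u * τ v) := by ring
        rw [h2, one_mul] at h3; exact h3.symm
      rw [eσ, eτ, h1, ih]
  exact key h.some

end Aux
section Meas
set_option linter.unusedSectionVars false
variable {V : Type} [Fintype V] [DecidableEq V]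

instance : NullSingletonClass (gaussianReal 0 1 : Measure ℝ) :=
  ⟨fun x => gaussianReal_absolutelyContinuous 0 one_ne_zero (measure_singleton x)⟩

lemma gaussianReal_map_neg' :
    (gaussianReal 0 1 : Measure ℝ).map (fun x : ℝ => -x) = gaussianReal 0 1 := by
  have h := gaussianReal_map_const_mul (μ := 0) (v := 1) (-1)
  have hv : NNReal.mk ((-1 : ℝ) ^ 2) (sq_nonneg _) = 1 := NNReal.eq (by norm_num)
  rw [hv, one_mul, mul_zero] at h
  have hfun : ((-1 : ℝ) * ·) = (fun x : ℝ => -x) := funext fun x => by ring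
  rw [hfun] at h
  exact h

lemma pi_map_piCongrRight {ι : Type} [Fintype ι] (μ : ι → Measure ℝ)
    [∀ i, IsProbabilityMeasure (μ i)] (e : ι → ℝ ≃ᵐ ℝ) :
    (Measure.pi μ).map (MeasurableEquiv.piCongrRight e) =
      Measure.pi fun i => (μ i).map (e i) := by
  haveI : ∀ i, IsProbabilityMeasure ((μ i).map (e i)) := fun i =>
    Measure.isProbabilityMeasure_map (e i).measurable.aemeasurable
  refine (Measure.pi_eq (μ := fun i => (μ i).map (e i)) fun s hs => ?_).symm
  rw [Measure.map_apply (MeasurableEquiv.measurable _) (MeasurableSet.univ_pi hs)]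
  have hpre : (MeasurableEquiv.piCongrRight e) ⁻¹' Set.pi Set.univ s
      = Set.pi Set.univ fun i => e i ⁻¹' s i := by
    ext x
    simp [MeasurableEquiv.piCongrRight, Equiv.piCongrRight, Set.mem_pi]
  rw [hpre, Measure.pi_pi]
  exact Finset.prod_congr rfl fun i _ =>
    (Measure.map_apply (e i).measurable (hs i)).symm

lemma map_flipEquiv (D : Finset (Sym2 V)) :
    (gaussEnv V).map (flipEquiv D) = gaussEnv V := by
  unfold gaussEnv flipEquiv
  rw [pi_map_piCongrRight (fun _ : Sym2 V => (gaussianReal 0 1 : Measure ℝ))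
    (fun e => if e ∈ D then negE else MeasurableEquiv.refl ℝ)]
  congr 1
  funext e
  by_cases h : e ∈ D
  · simp only [h, if_true]
    rw [show ⇑negE = fun x : ℝ => -x from rfl, gaussianReal_map_neg']
  · simp only [h, if_false]
    rw [show ⇑(MeasurableEquiv.refl ℝ) = id from rfl, Measure.map_id]

/-- An opaque copy of the predicate `· = e0`, to keep typeclass instances uniform. -/
def PHyp {V : Type} (e0 : Sym2 V) : Sym2 V → Prop := fun e => e = e0

instance {V : Type} [DecidableEq V] (e0 : Sym2 V) : DecidablePred (PHyp e0) := fun e =>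
  decidable_of_iff (e = e0) Iff.rfl

lemma null_hyperplane (s : Finset (Sym2 V)) (c : Sym2 V → ℝ) (e0 : Sym2 V)
    (he0 : e0 ∈ s) (hc : c e0 ≠ 0) :
    gaussEnv V {J : Env V | ∑ e ∈ s, c e * J e = 0} = 0 := by
  classical
  set S : Set (Env V) := {J : Env V | ∑ e ∈ s, c e * J e = 0} with hS
  have hSmeas : MeasurableSet S := by
    have hm : Measurable fun J : Env V => ∑ e ∈ s, c e * J e :=
      Finset.measurable_sum _ fun e _ => by fun_prop
    exact hm (measurableSet_singleton 0)
  set T := MeasurableEquiv.piEquivPiSubtypeProd (fun _ : Sym2 V => ℝ) (PHyp e0) with hT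
  have hmp := measurePreserving_piEquivPiSubtypeProd
    (fun _ : Sym2 V => (gaussianReal 0 1 : Measure ℝ)) (PHyp e0)
  set ν₁ := Measure.pi fun _ : Subtype (PHyp e0) => (gaussianReal 0 1 : Measure ℝ) with hν₁
  set ν₂ := Measure.pi fun _ : {e : Sym2 V // ¬PHyp e0 e} => (gaussianReal 0 1 : Measure ℝ)
    with hν₂
  have hU : MeasurableSet (T.symm ⁻¹' S) := T.symm.measurable hSmeas
  have h1 : gaussEnv V S = (ν₁.prod ν₂) (T.symm ⁻¹' S) := by
    have h3 := hmp.measure_preimage hU.nullMeasurableSet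
    have h2 : T ⁻¹' (T.symm ⁻¹' S) = S := by ext J; simp
    rw [h2] at h3
    exact h3
  rw [h1, Measure.prod_apply_symm hU]
  refine (lintegral_congr fun y => ?_).trans lintegral_zero
  set i0 : Subtype (PHyp e0) := ⟨e0, rfl⟩ with hi0
  have hTsymm : ∀ (x : Subtype (PHyp e0) → ℝ) (e : Sym2 V),
      T.symm (x, y) e = if h : PHyp e0 e then x ⟨e, h⟩ else y ⟨e, h⟩ := fun x e => rfl
  set K : ℝ := ∑ e ∈ s.erase e0,
    c e * T.symm ((fun _ => 0 : Subtype (PHyp e0) → ℝ), y) e with hK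
  have hsum : ∀ x : Subtype (PHyp e0) → ℝ,
      ∑ e ∈ s, c e * T.symm (x, y) e = c e0 * x i0 + K := by
    intro x
    rw [← Finset.add_sum_erase _ _ he0, hK]
    congr 1
    · rw [hTsymm x e0, dif_pos (show PHyp e0 e0 from rfl)]
    · refine Finset.sum_congr rfl fun e he => ?_
      have hne : ¬ PHyp e0 e := (Finset.mem_erase.mp he).1
      rw [hTsymm, hTsymm, dif_neg hne, dif_neg hne]
  have hslice : ((fun x : Subtype (PHyp e0) → ℝ => (x, y)) ⁻¹' (T.symm ⁻¹' S))
      = {x : Subtype (PHyp e0) → ℝ | x i0 = -K / c e0} := by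
    ext x
    simp only [Set.mem_preimage, Set.mem_setOf_eq, hS]
    rw [hsum x, eq_div_iff hc, mul_comm (x i0) (c e0)]
    constructor <;> intro h' <;> linarith
  rw [hslice]
  exact Measure.pi_hyperplane _ i0 _

end Meas
section Unique
set_option linter.unusedSectionVars false
variable {V : Type} [Fintype V] [DecidableEq V]

lemma null_ham_eq (G : SimpleGraph V) [DecidableRel G.Adj] {σ τ : V → ℝ}
    (hdiff : ∃ e ∈ G.edgeFinset, spinProd σ e ≠ spinProd τ e) :
    gaussEnv V {J : Env V | ham G J σ = ham G J τ} = 0 := by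
  obtain ⟨e0, he0, hne⟩ := hdiff
  have hset : {J : Env V | ham G J σ = ham G J τ}
      = {J : Env V | ∑ e ∈ G.edgeFinset, (spinProd σ e - spinProd τ e) * J e = 0} := by
    ext J
    have hsub : (∑ e ∈ G.edgeFinset, J e * spinProd σ e)
        - ∑ e ∈ G.edgeFinset, J e * spinProd τ e
        = ∑ e ∈ G.edgeFinset, (spinProd σ e - spinProd τ e) * J e := by
      rw [← Finset.sum_sub_distrib]
      exact Finset.sum_congr rfl fun e _ => by ring
    simp only [ham, Set.mem_setOf_eq, neg_inj]
    rw [← sub_eq_zero, hsub]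
  rw [hset]
  exact null_hyperplane G.edgeFinset _ e0 he0 (sub_ne_zero.mpr hne)

/-- Boolean encoding of a spin configuration. -/
noncomputable def cfg (a : V → Bool) : V → ℝ := fun v => if a v then 1 else -1

lemma cfg_eq {σ : V → ℝ} (h : IsConfig σ) :
    cfg (fun v => decide (σ v = 1)) = σ := by
  funext v
  rcases h v with h' | h'
  · simp [cfg, h']
  · have hne : σ v ≠ 1 := by rw [h']; norm_num
    simp only [cfg, h']
    norm_num

/-- There is a measurable null set outside of which all ground states have the
same spin products along edges. -/
lemma exists_unique_superset (G : SimpleGraph V) [DecidableRel G.Adj] (B : Finset V)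
    (γ : V → ℝ) :
    ∃ M : Set (Env V), MeasurableSet M ∧ gaussEnv V M = 0 ∧
      ∀ J ∉ M, ∀ σ τ : V → ℝ, IsGroundState G B γ J σ → IsGroundState G B γ J τ →
        ∀ e ∈ G.edgeFinset, spinProd σ e = spinProd τ e := by
  classical
  set P : Finset ((V → Bool) × (V → Bool)) :=
    Finset.univ.filter fun q =>
      ∃ e ∈ G.edgeFinset, spinProd (cfg q.1) e ≠ spinProd (cfg q.2) e with hP
  refine ⟨⋃ q ∈ (P : Set ((V → Bool) × (V → Bool))),
      {J : Env V | ham G J (cfg q.1) = ham G J (cfg q.2)}, ?_, ?_, ?_⟩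
  · refine MeasurableSet.biUnion P.countable_toSet fun q hq => ?_
    have hm : Measurable fun J : Env V => ham G J (cfg q.1) - ham G J (cfg q.2) := by
      apply Measurable.sub <;>
      · unfold ham
        exact (Finset.measurable_sum _ fun e _ =>
          (measurable_pi_apply e).mul_const _).neg
    have : {J : Env V | ham G J (cfg q.1) = ham G J (cfg q.2)}
        = (fun J : Env V => ham G J (cfg q.1) - ham G J (cfg q.2)) ⁻¹' {0} := by
      ext J; simp [sub_eq_zero]
    rw [this]
    exact hm (measurableSet_singleton 0)
  · refine (measure_biUnion_null_iff P.countable_toSet).mpr fun q hq => ?_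
    rw [Finset.mem_coe, hP, Finset.mem_filter] at hq
    exact null_ham_eq G hq.2
  · intro J hJ σ τ hσ hτ
    by_contra hcon
    push_neg at hcon
    obtain ⟨e, he, hne⟩ := hcon
    set a := fun v => decide (σ v = 1) with ha
    set b := fun v => decide (τ v = 1) with hb
    have hca : cfg a = σ := cfg_eq hσ.1
    have hcb : cfg b = τ := cfg_eq hτ.1
    have hqP : (a, b) ∈ P := by
      rw [hP, Finset.mem_filter]
      exact ⟨Finset.mem_univ _, e, he, by rw [hca, hcb]; exact hne⟩
    have hham : ham G J σ = ham G J τ :=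
      le_antisymm (hσ.2.2 τ hτ.1 hτ.2.1) (hτ.2.2 σ hσ.1 hσ.2.1)
    exact hJ (Set.mem_biUnion hqP (by rw [Set.mem_setOf_eq, hca, hcb]; exact hham))

lemma hermiteFn_zero (x : ℝ) : hermiteFn 0 x = 1 := by
  simp [hermiteFn, Polynomial.hermite_zero]

end Unique
section Key
set_option linter.unusedSectionVars false
variable {V : Type} [Fintype V] [DecidableEq V]

lemma integral_cut_zero (G : SimpleGraph V) [DecidableRel G.Adj] (B : Finset V) (γ : V → ℝ)
    (hconn : G.Connected) (i j : V)
    (gs : Env V → V → ℝ) (hgs : ∀ J, IsGroundState G B γ J (gs J))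
    (n : Sym2 V → ℕ) (A : Finset V)
    (hone : (i ∈ A ∧ j ∉ A) ∨ (j ∈ A ∧ i ∉ A))
    (hAB : ∀ b ∈ B, b ∉ A)
    (hbd : ∀ e ∈ edgeBdry G A, n e = 0) :
    ∫ J, gs J i * gs J j * hermiteProd G n J ∂(gaussEnv V) = 0 := by
  classical
  set Φ := flipEquiv (edgeBdry G A) with hΦ
  obtain ⟨M, hMmeas, hMnull, hMuniq⟩ := exists_unique_superset G B γ
  have hmap : (gaussEnv V).map Φ = gaussEnv V := map_flipEquiv _
  have hpre : gaussEnv V (Φ ⁻¹' M) = 0 := by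
    have h4 := Measure.map_apply (μ := gaussEnv V) Φ.measurable hMmeas
    rw [hmap] at h4
    rw [← h4]
    exact hMnull
  have hherm : ∀ J : Env V, hermiteProd G n (Φ J) = hermiteProd G n J := by
    intro J
    refine Finset.prod_congr rfl fun e he => ?_
    rw [hΦ, flipEquiv_apply]
    by_cases hD : e ∈ edgeBdry G A
    · rw [if_pos hD, hbd e hD, hermiteFn_zero, hermiteFn_zero]
    · rw [if_neg hD]
  have hae : ∀ᵐ J ∂gaussEnv V,
      gs (Φ J) i * gs (Φ J) j * hermiteProd G n (Φ J)
        = -(gs J i * gs J j * hermiteProd G n J) := by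
    have h1 : ∀ᵐ J ∂gaussEnv V, Φ J ∉ M := by
      rw [ae_iff]
      have hset : {J : Env V | ¬ Φ J ∉ M} = Φ ⁻¹' M := by
        ext J; simp [Set.mem_preimage]
      rw [hset]
      exact hpre
    filter_upwards [h1] with J hJ
    have hg1 : IsGroundState G B γ (Φ J) (gs (Φ J)) := hgs (Φ J)
    have hg2 : IsGroundState G B γ (Φ J) (flipOn A (gs J)) :=
      isGroundState_flip G B γ A hAB (hgs J)
    have hsp := hMuniq (Φ J) hJ _ _ hg1 hg2
    have hpair : gs (Φ J) i * gs (Φ J) j = flipOn A (gs J) i * flipOn A (gs J) j :=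
      spin_pair_eq hg1.1 hg2.1 hsp (hconn.preconnected i j)
    have hflip : flipOn A (gs J) i * flipOn A (gs J) j = -(gs J i * gs J j) := by
      rcases hone with ⟨hiA, hjA⟩ | ⟨hjA, hiA⟩
      · unfold flipOn; rw [if_pos hiA, if_neg hjA]; ring
      · unfold flipOn; rw [if_neg hiA, if_pos hjA]; ring
    rw [hherm J, hpair, hflip]
    ring
  have hint : ∫ J, gs J i * gs J j * hermiteProd G n J ∂(gaussEnv V)
      = ∫ J, gs (Φ J) i * gs (Φ J) j * hermiteProd G n (Φ J) ∂(gaussEnv V) := by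
    conv_lhs => rw [← hmap]
    exact MeasureTheory.integral_map_equiv Φ _
  have h2 := integral_congr_ae hae
  rw [integral_neg] at h2
  have h3 := hint.trans h2
  linarith [h3]

end Key
/-- Lemma 2.1: the Hermite coefficient `φ̂(n)` of `φ(J) = σ_i σ_j`
vanishes unless `i, j ∈ V(n)` and the components of `G(n)` containing `i` and `j`
coincide or both intersect `B`. -/
theorem hermite_coefficient_support (V : Type) [Fintype V] [DecidableEq V]
    (G : SimpleGraph V) [DecidableRel G.Adj] (B : Finset V) (γ : V → ℝ)
    (hconn : G.Connected) (hE : 2 ≤ G.edgeFinset.card)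
    (hVo : (univ \ B).Nonempty)
    (hVoconn : (G.induce ((univ \ B : Finset V) : Set V)).Connected)
    (i j : V) (hi : i ∈ univ \ B) (hj : j ∈ univ \ B) (hij : i ≠ j)
    (gs : Env V → V → ℝ) (hgs : ∀ J, IsGroundState G B γ J (gs J))
    (n : Sym2 V → ℕ)
    (hne : (∫ J, gs J i * gs J j * hermiteProd G n J ∂(gaussEnv V)) ≠ 0) :
    (∃ e ∈ suppEdges G n, i ∈ e) ∧ (∃ e ∈ suppEdges G n, j ∈ e) ∧
      ((suppGraph G n).Reachable i j ∨
        ((∃ b ∈ B, (suppGraph G n).Reachable i b) ∧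
          (∃ b ∈ B, (suppGraph G n).Reachable j b))) := by
  classical
  have hiB : i ∉ B := (Finset.mem_sdiff.mp hi).2
  have hjB : j ∉ B := (Finset.mem_sdiff.mp hj).2
  have hedge : ∀ {u v : V}, (suppGraph G n).Adj u v → s(u, v) ∈ suppEdges G n ∧ u ≠ v := by
    intro u v h
    rw [suppGraph, SimpleGraph.fromEdgeSet_adj] at h
    exact ⟨Finset.mem_coe.mp h.1, h.2⟩
  have hreach_edge : ∀ {x v : V}, (suppGraph G n).Reachable x v → x ≠ v →
      ∃ e ∈ suppEdges G n, x ∈ e := by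
    intro x v h hxv
    obtain ⟨w⟩ := h
    cases w with
    | nil => exact absurd rfl hxv
    | cons hadj p =>
      obtain ⟨hmem, -⟩ := hedge hadj
      exact ⟨_, hmem, Sym2.mem_mk_left _ _⟩
  set comp : V → Finset V :=
    fun x => Finset.univ.filter fun v => (suppGraph G n).Reachable x v with hcomp
  have hmemcomp : ∀ x v : V, v ∈ comp x ↔ (suppGraph G n).Reachable x v := by
    intro x v
    rw [hcomp]
    simp [Finset.mem_filter]
  have hselfcomp : ∀ x : V, x ∈ comp x := fun x => (hmemcomp x x).mpr (SimpleGraph.Reachable.refl x)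
  have hbdcomp : ∀ x : V, ∀ e ∈ edgeBdry G (comp x), n e = 0 := by
    intro x e he
    by_contra h0
    obtain ⟨heE, u, hu, v, hv, huA, hvA⟩ := mem_edgeBdry.mp he
    have huv : u ≠ v := fun h => hvA (h ▸ huA)
    have heuv : e = s(u, v) := (Sym2.mem_and_mem_iff huv).mp ⟨hu, hv⟩
    have hesupp : e ∈ suppEdges G n :=
      Finset.mem_filter.mpr ⟨heE, Nat.pos_of_ne_zero h0⟩
    have hadj : (suppGraph G n).Adj u v := by
      rw [suppGraph, SimpleGraph.fromEdgeSet_adj]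
      exact ⟨by rw [← heuv]; exact Finset.mem_coe.mpr hesupp, huv⟩
    have hru : (suppGraph G n).Reachable x u := (hmemcomp x u).mp huA
    exact hvA ((hmemcomp x v).mpr (hru.trans hadj.reachable))
  have happly : ∀ A : Finset V, ((i ∈ A ∧ j ∉ A) ∨ (j ∈ A ∧ i ∉ A)) →
      (∀ b ∈ B, b ∉ A) → (∀ e ∈ edgeBdry G A, n e = 0) → False := fun A h1 h2 h3 =>
    hne (integral_cut_zero G B γ hconn i j gs hgs n A h1 h2 h3)
  refine ⟨?_, ?_, ?_⟩
  · by_contra hIn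
    push_neg at hIn
    refine happly (comp i) (Or.inl ⟨hselfcomp i, fun hjA => ?_⟩) (fun b hb hbA => ?_)
      (hbdcomp i)
    · obtain ⟨e, heS, hie⟩ := hreach_edge ((hmemcomp i j).mp hjA) hij
      exact hIn e heS hie
    · have hib : i ≠ b := fun h => hiB (h ▸ hb)
      obtain ⟨e, heS, hie⟩ := hreach_edge ((hmemcomp i b).mp hbA) hib
      exact hIn e heS hie
  · by_contra hIn
    push_neg at hIn
    refine happly (comp j) (Or.inr ⟨hselfcomp j, fun hiA => ?_⟩) (fun b hb hbA => ?_)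
      (hbdcomp j)
    · obtain ⟨e, heS, hje⟩ := hreach_edge ((hmemcomp j i).mp hiA) hij.symm
      exact hIn e heS hje
    · have hjb : j ≠ b := fun h => hjB (h ▸ hb)
      obtain ⟨e, heS, hje⟩ := hreach_edge ((hmemcomp j b).mp hbA) hjb
      exact hIn e heS hje
  · by_contra h3
    rw [not_or] at h3
    obtain ⟨hnr, hnb⟩ := h3
    rcases not_and_or.mp hnb with hb1 | hb2
    · push_neg at hb1
      refine happly (comp i) (Or.inl ⟨hselfcomp i, fun hjA => ?_⟩) (fun b hb hbA => ?_)
        (hbdcomp i)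
      · exact hnr ((hmemcomp i j).mp hjA)
      · exact hb1 b hb ((hmemcomp i b).mp hbA)
    · push_neg at hb2
      refine happly (comp j) (Or.inr ⟨hselfcomp j, fun hiA => ?_⟩) (fun b hb hbA => ?_)
        (hbdcomp j)
      · exact hnr ((hmemcomp j i).mp hiA).symm
      · exact hb2 b hb ((hmemcomp j b).mp hbA)

end EA
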